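/- Let U ∈ H^{1/2}₊(𝕋;ℂ^{M×N}), V ∈ H^{1/2}₊(𝕋;ℂ^{P×N}), W ∈ H^{1/2}₊(𝕋;ℂ^{P×Q}). Then for all G ∈ L²₊(𝕋;ℂ^{P×d}) and F ∈ L²₊(𝕋;ℂ^{d×Q}): K^r_U K^l_V(G) = H^r_U H^l_V(G) − U·(V*G)^(0) and K^l_V K^r_W(F) = H^l_V H^r_W(F) − (FW*)^(0)·V, where (·)^(0) denotes the zeroth Fourier coefficient of the pointwise matrix product. -/

import Mathlib

open MeasureTheory Complex Matrix
open scoped Real ENNReal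

noncomputable section

abbrev Tc := AddCircle (2 * Real.pi)

abbrev Mat (M N : ℕ) := Matrix (Fin M) (Fin N) ℂ

attribute [local instance] Matrix.normedAddCommGroup Matrix.normedSpace

instance : Fact (0 < 2 * Real.pi) := ⟨by positivity⟩

/-- Fourier coefficient of a matrix-valued function on the torus. -/
def mcoeff {M N : ℕ} (F : Tc → Mat M N) (n : ℤ) : Mat M N := fourierCoeff F n

/-- Membership in the Hardy space `L²₊`: square integrable with vanishing
negative Fourier modes. -/
def Hardy {M N : ℕ} (F : Tc → Mat M N) : Prop :=
  MemLp F 2 volume ∧ ∀ n : ℤ, n < 0 → mcoeff F n = 0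

/-- `V` is (a representative of) the Szegő projection `Π_{≥0} U` of `U`. -/
def IsProj {M N : ℕ} (U V : Tc → Mat M N) : Prop :=
  MemLp V 2 volume ∧ ∀ n : ℤ, mcoeff V n = if 0 ≤ n then mcoeff U n else 0


/-- Squared Frobenius norm of a matrix. -/
def frobSq {M N : ℕ} (A : Mat M N) : ℝ := ∑ k, ∑ j, ‖A k j‖ ^ 2

/-- Membership in `H^{1/2}₊(𝕋; ℂ^{M×N})`: Hardy plus finiteness of the `H^{1/2}`
Sobolev norm. -/
def InHhalfPlus {M N : ℕ} (U : Tc → Mat M N) : Prop :=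
  Hardy U ∧ Summable (fun n : ℤ => Real.sqrt (1 + (n : ℝ) ^ 2) * frobSq (mcoeff U n))

/-- The `L²` inner product `⟨A, B⟩ = (1/2π) ∫ tr(A(x) B(x)*) dx` on matrix-valued
functions. -/
def l2inner {M N : ℕ} (A B : Tc → Mat M N) : ℂ :=
  (1 / (2 * Real.pi) : ℂ) • ∫ x : Tc, Matrix.trace (A x * (B x)ᴴ)

def matContinuousENorm {M N : ℕ} : ContinuousENorm (Mat M N) :=
  @SeminormedAddGroup.toContinuousENorm _ _

section Aux

open AddCircle Filter

attribute [local instance] matContinuousENorm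

local notation "μh" => @AddCircle.haarAddCircle (2 * Real.pi) _

lemma twopi_pos : (0:ℝ) < 2 * Real.pi := by positivity

lemma ofReal_twopi_ne_zero : (ENNReal.ofReal (2 * Real.pi)) ≠ 0 :=
  (ENNReal.ofReal_pos.mpr twopi_pos).ne'

lemma memLp_haar {E : Type} [NormedAddCommGroup E] {f : Tc → E} {p : ℝ≥0∞}
    (hf : MemLp f p volume) : MemLp f p μh := by
  have h2 := hf.smul_measure (c := (ENNReal.ofReal (2 * Real.pi))⁻¹)
    (ENNReal.inv_ne_top.mpr ofReal_twopi_ne_zero)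
  rwa [AddCircle.volume_eq_smul_haarAddCircle, smul_smul,
    ENNReal.inv_mul_cancel ofReal_twopi_ne_zero ENNReal.ofReal_ne_top, one_smul] at h2

lemma fourierCoeff_congr_ae' {E : Type} [NormedAddCommGroup E] [NormedSpace ℂ E]
    {f g : Tc → E} (h : f =ᵐ[μh] g) (n : ℤ) : fourierCoeff f n = fourierCoeff g n := by
  unfold fourierCoeff
  exact integral_congr_ae (h.mono fun x hx => by simp only [hx])

lemma fourierCoeff_fourier_smul {E : Type} [NormedAddCommGroup E] [NormedSpace ℂ E]
    (g : Tc → E) (m n : ℤ) :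
    fourierCoeff (fun x => fourier m x • g x) n = fourierCoeff g (n - m) := by
  unfold fourierCoeff
  refine integral_congr_ae (Eventually.of_forall fun x => ?_)
  have hidx : -(n - m) = -n + m := by omega
  simp only [smul_smul, ← fourier_add, hidx]

lemma integrable_fourier_smul {E : Type} [NormedAddCommGroup E] [NormedSpace ℂ E]
    {F : Tc → E} (hF : Integrable F μh) (m : ℤ) :
    Integrable (fun x => fourier m x • F x) μh := by
  refine hF.norm.mono' (((fourier m).continuous.aestronglyMeasurable).smul hF.1)
    (Eventually.of_forall fun x => ?_)
  rw [norm_smul]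
  have h1 : ‖fourier m x‖ = 1 := Circle.norm_coe _
  simp only [h1, one_mul, le_refl]

lemma integral_fourier_haar (m : ℤ) :
    (∫ x : Tc, fourier m x ∂μh) = if m = 0 then 1 else 0 := by
  split_ifs with h
  · subst h
    simp
  · exact integral_eq_zero_of_add_right_eq_neg
      (fourier_add_half_inv_index h twopi_pos)

lemma fourierCoeff_const' {E : Type} [NormedAddCommGroup E] [NormedSpace ℂ E]
    [CompleteSpace E] (a : E) (n : ℤ) :
    fourierCoeff (fun _ : Tc => a) n = if n = 0 then a else 0 := by
  unfold fourierCoeff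
  rw [integral_smul_const, integral_fourier_haar]
  rcases eq_or_ne n 0 with h | h
  · simp [h]
  · simp [h, neg_eq_zero]

lemma fourierCoeff_sub' {E : Type} [NormedAddCommGroup E] [NormedSpace ℂ E]
    {f g : Tc → E} (hf : Integrable f μh) (hg : Integrable g μh) (n : ℤ) :
    fourierCoeff (fun x => f x - g x) n = fourierCoeff f n - fourierCoeff g n := by
  unfold fourierCoeff
  rw [← integral_sub (integrable_fourier_smul hf _) (integrable_fourier_smul hg _)]
  simp [smul_sub]

lemma ae_eq_of_fourierCoeff_eq {f g : Tc → ℂ} (hf : MemLp f 2 μh) (hg : MemLp g 2 μh)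
    (h : ∀ n : ℤ, fourierCoeff f n = fourierCoeff g n) : f =ᵐ[μh] g := by
  have key : hf.toLp f = hg.toLp g := by
    apply (fourierBasis (T := 2 * Real.pi)).repr.injective
    apply lp.ext
    funext n
    rw [fourierBasis_repr, fourierBasis_repr]
    calc fourierCoeff (hf.toLp f) n = fourierCoeff f n :=
          fourierCoeff_congr_ae' hf.coeFn_toLp n
      _ = fourierCoeff g n := h n
      _ = fourierCoeff (hg.toLp g) n := (fourierCoeff_congr_ae' hg.coeFn_toLp n).symm
  exact (MemLp.toLp_eq_toLp_iff hf hg).mp key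

lemma ae_eq_of_entries_ae_eq {M N : ℕ} {f g : Tc → Mat M N}
    (h : ∀ i j, (fun x => f x i j) =ᵐ[μh] fun x => g x i j) : f =ᵐ[μh] g := by
  have h' : ∀ᵐ x ∂μh, ∀ i j, f x i j = g x i j := by
    rw [ae_all_iff]
    intro i
    rw [ae_all_iff]
    exact h i
  exact h'.mono fun x hx => Matrix.ext fun i j => hx i j

lemma memLp_entry {M N : ℕ} {p : ℝ≥0∞} {F : Tc → Mat M N} (hF : MemLp F p μh)
    (i : Fin M) (j : Fin N) : MemLp (fun x => F x i j) p μh := by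
  refine hF.of_le ?_ (Eventually.of_forall fun x =>
    Matrix.norm_entry_le_entrywise_sup_norm (F x))
  have h1 : Continuous fun A : Mat M N => A i := continuous_apply i
  have hc : Continuous fun A : Mat M N => A i j := (continuous_apply j).comp h1
  exact hc.comp_aestronglyMeasurable hF.1

/-- Entry extraction as a continuous linear map. -/
def entryCLM (M N : ℕ) (i : Fin M) (j : Fin N) : Mat M N →L[ℂ] ℂ :=
  LinearMap.toContinuousLinearMap
    { toFun := fun A => A i j
      map_add' := fun _ _ => rfl
      map_smul' := fun _ _ => rfl }

lemma mcoeff_entry {M N : ℕ} {F : Tc → Mat M N} (hF : Integrable F μh) (n : ℤ)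
    (i : Fin M) (j : Fin N) :
    mcoeff F n i j = fourierCoeff (fun x => F x i j) n := by
  have h1 := (entryCLM M N i j).integral_comp_comm (integrable_fourier_smul hF (-n))
  have h2 : ∀ A : Mat M N, entryCLM M N i j A = A i j := fun A => rfl
  have h3 : mcoeff F n = ∫ x : Tc, fourier (-n) x • F x ∂μh := rfl
  have h4 : fourierCoeff (fun x => F x i j) n
      = ∫ x : Tc, fourier (-n) x • F x i j ∂μh := rfl
  rw [h3, h4, ← h2 (∫ x : Tc, fourier (-n) x • F x ∂μh)]
  refine h1.symm.trans ?_
  refine integral_congr_ae (Eventually.of_forall fun x => ?_)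
  exact rfl

lemma memLp_conjT {M N : ℕ} {p : ℝ≥0∞} {F : Tc → Mat M N} (hF : MemLp F p μh) :
    MemLp (fun x => (F x)ᴴ) p μh := by
  refine hF.of_le ?_ (Eventually.of_forall fun x =>
    le_of_eq (Matrix.norm_conjTranspose (F x)))
  exact (Continuous.matrix_conjTranspose continuous_id).comp_aestronglyMeasurable hF.1

lemma aesm_matmul {m k n : ℕ} {A : Tc → Mat m k} {B : Tc → Mat k n}
    (hA : AEStronglyMeasurable A μh) (hB : AEStronglyMeasurable B μh) :
    AEStronglyMeasurable (fun x => A x * B x) μh := by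
  have hc : Continuous (fun p : Mat m k × Mat k n => p.1 * p.2) :=
    Continuous.matrix_mul continuous_fst continuous_snd
  exact hc.comp_aestronglyMeasurable (hA.prodMk hB)

lemma norm_matmul_le {m k n : ℕ} (A : Mat m k) (B : Mat k n) :
    ‖A * B‖ ≤ (k : ℝ) * (‖A‖ * ‖B‖) := by
  have hk : (0:ℝ) ≤ (k : ℝ) * (‖A‖ * ‖B‖) := by positivity
  rw [Matrix.norm_le_iff hk]
  intro i j
  calc ‖(A * B) i j‖ = ‖∑ l, A i l * B l j‖ := by rw [Matrix.mul_apply]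
    _ ≤ ∑ l, ‖A i l * B l j‖ := norm_sum_le _ _
    _ ≤ ∑ l : Fin k, ‖A‖ * ‖B‖ := by
        refine Finset.sum_le_sum fun l _ => ?_
        rw [norm_mul]
        exact mul_le_mul (Matrix.norm_entry_le_entrywise_sup_norm A)
          (Matrix.norm_entry_le_entrywise_sup_norm B) (norm_nonneg _) (norm_nonneg _)
    _ = (k : ℝ) * (‖A‖ * ‖B‖) := by simp [Finset.sum_const, nsmul_eq_mul]

lemma integrable_matmul {m k n : ℕ} {A : Tc → Mat m k} {B : Tc → Mat k n}
    (hA : MemLp A 2 μh) (hB : MemLp B 2 μh) :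
    Integrable (fun x => A x * B x) μh := by
  have hAB : Integrable (fun x => ‖A x‖ * ‖B x‖) μh := by
    have h : MemLp ((fun x => ‖A x‖) • (fun x => ‖B x‖)) 1 μh :=
      haveI : ENNReal.HolderTriple 2 2 1 := ⟨by rw [inv_one, ENNReal.inv_two_add_inv_two]⟩
      hB.norm.smul hA.norm
    exact memLp_one_iff_integrable.mp h
  refine (hAB.const_mul (k : ℝ)).mono' (aesm_matmul hA.1 hB.1)
    (Eventually.of_forall fun x => ?_)
  exact norm_matmul_le (A x) (B x)

lemma mcoeff_conjT_zero {M N : ℕ} {F : Tc → Mat M N} (hF : Integrable F μh) :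
    (mcoeff F 0)ᴴ = mcoeff (fun x => (F x)ᴴ) 0 := by
  have hFT : Integrable (fun x => (F x)ᴴ) μh := by
    refine hF.norm.mono'
      ((Continuous.matrix_conjTranspose continuous_id).comp_aestronglyMeasurable hF.1)
      (Eventually.of_forall fun x => le_of_eq (Matrix.norm_conjTranspose (F x)))
  ext i j
  rw [Matrix.conjTranspose_apply, mcoeff_entry hF 0 j i, mcoeff_entry hFT 0 i j]
  have h1 : fourierCoeff (fun x => F x j i) 0 = ∫ x : Tc, F x j i ∂μh := by
    show (∫ x : Tc, fourier (-0) x • F x j i ∂μh) = _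
    simp
  have h2 : fourierCoeff (fun x => (F x)ᴴ i j) 0
      = ∫ x : Tc, (starRingEnd ℂ) (F x j i) ∂μh := by
    show (∫ x : Tc, fourier (-0) x • (F x)ᴴ i j ∂μh) = _
    simp [Matrix.conjTranspose_apply]
  rw [h1, h2, integral_conj]
  rfl

lemma memLp_fourier_mul {h : Tc → ℂ} (hh : MemLp h 2 μh) (m : ℤ) :
    MemLp (fun x => fourier m x * h x) 2 μh := by
  refine hh.of_le ((fourier m).continuous.aestronglyMeasurable.mul hh.1)
    (Eventually.of_forall fun x => ?_)
  have h1 : ‖fourier m x‖ = 1 := Circle.norm_coe _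
  simp only [norm_mul, h1, one_mul, le_refl]

/-- The key shift identity: `K = e^{-ix}(Q - Φ^(0))` a.e. -/
lemma shift_ae {a b : ℕ} {Φ K Q : Tc → Mat a b}
    (hΦint : Integrable Φ μh)
    (hK : MemLp K 2 volume)
    (hK' : ∀ n : ℤ, mcoeff K n = if 0 ≤ n then mcoeff Φ (n + 1) else 0)
    (hQ : IsProj Φ Q) :
    K =ᵐ[μh] fun x => fourier (-1) x • (Q x - mcoeff Φ 0) := by
  have hK2 : MemLp K 2 μh := memLp_haar hK
  have hQ2 : MemLp Q 2 μh := memLp_haar hQ.1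
  refine ae_eq_of_entries_ae_eq fun i j => ?_
  have hrhs : (fun x => (fourier (-1) x • (Q x - mcoeff Φ 0)) i j)
      = fun x => fourier (-1) x * (Q x i j - mcoeff Φ 0 i j) := by
    funext x
    simp [Matrix.smul_apply, Matrix.sub_apply]
  rw [hrhs]
  refine ae_eq_of_fourierCoeff_eq (memLp_entry hK2 i j)
    (memLp_fourier_mul ((memLp_entry hQ2 i j).sub (memLp_const _)) (-1)) fun n => ?_
  have hKint : Integrable K μh := hK2.integrable (by norm_num)
  have hQint : Integrable Q μh := hQ2.integrable (by norm_num)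
  have hL : fourierCoeff (fun x => K x i j) n = mcoeff K n i j :=
    (mcoeff_entry hKint n i j).symm
  have hmod : fourierCoeff (fun x => fourier (-1) x * (Q x i j - mcoeff Φ 0 i j)) n
      = fourierCoeff (fun x => Q x i j - mcoeff Φ 0 i j) (n + 1) := by
    have := fourierCoeff_fourier_smul (fun x => Q x i j - mcoeff Φ 0 i j) (-1) n
    simpa [sub_neg_eq_add, smul_eq_mul] using this
  rw [hL, hmod, fourierCoeff_sub' ((memLp_entry hQ2 i j).integrable (by norm_num))
    (integrable_const _), fourierCoeff_const', ← mcoeff_entry hQint (n + 1) i j,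
    hK' n, hQ.2 (n + 1)]
  rcases lt_trichotomy n (-1) with h | h | h
  · have h1 : ¬ (0 ≤ n) := by omega
    have h2 : ¬ (0 ≤ n + 1) := by omega
    have h3 : ¬ (n + 1 = 0) := by omega
    simp [h1, h2, h3]
  · subst h
    norm_num
  · have h1 : 0 ≤ n := by omega
    have h2 : 0 ≤ n + 1 := by omega
    have h3 : ¬ (n + 1 = 0) := by omega
    simp [h1, h2, h3]

end Aux

section Main

open AddCircle Filter

local notation "μh" => @AddCircle.haarAddCircle (2 * Real.pi) _

/-- For `U ∈ H^{1/2}₊(ℂ^{M×N})`, `V ∈ H^{1/2}₊(ℂ^{P×N})`,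
`W ∈ H^{1/2}₊(ℂ^{P×Q})`:
`K^r_U K^l_V (G) = H^r_U H^l_V (G) − U·(V*G)^(0)` for `G ∈ L²₊(ℂ^{P×d})`, and
`K^l_V K^r_W (F) = H^l_V H^r_W (F) − (FW*)^(0)·V` for `F ∈ L²₊(ℂ^{d×Q})`.
Here `Kl` represents `K^l_V G` (coefficients `(G*V)^(n+1)` for `n ≥ 0`),
`Ql` represents `H^l_V G = Π_{≥0}(G*V)`, and similarly `Kr`, `Qr` for `F`; the
identities are stated via the Fourier coefficients of the (Hardy) images at
nonnegative frequencies. -/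
theorem stmt12 {M N P Q d : ℕ}
    (U : Tc → Mat M N) (hU : InHhalfPlus U)
    (V : Tc → Mat P N) (hV : InHhalfPlus V)
    (W : Tc → Mat P Q) (hW : InHhalfPlus W)
    (G : Tc → Mat P d) (hG : Hardy G)
    (F : Tc → Mat d Q) (hF : Hardy F)
    (Kl : Tc → Mat d N) (hKl : MemLp Kl 2 volume)
    (hKl' : ∀ n : ℤ, mcoeff Kl n
      = if 0 ≤ n then mcoeff (fun x => (G x)ᴴ * V x) (n + 1) else 0)
    (Ql : Tc → Mat d N) (hQl : IsProj (fun x => (G x)ᴴ * V x) Ql)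
    (Kr : Tc → Mat P d) (hKr : MemLp Kr 2 volume)
    (hKr' : ∀ n : ℤ, mcoeff Kr n
      = if 0 ≤ n then mcoeff (fun x => W x * (F x)ᴴ) (n + 1) else 0)
    (Qr : Tc → Mat P d) (hQr : IsProj (fun x => W x * (F x)ᴴ) Qr) :
    (∀ n : ℤ, 0 ≤ n →
      mcoeff (fun x => U x * (Kl x)ᴴ) (n + 1)
        = mcoeff (fun x => U x * (Ql x)ᴴ) n
          - mcoeff (fun x => U x * mcoeff (fun y => (V y)ᴴ * G y) 0) n) ∧
    (∀ n : ℤ, 0 ≤ n →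
      mcoeff (fun x => (Kr x)ᴴ * V x) (n + 1)
        = mcoeff (fun x => (Qr x)ᴴ * V x) n
          - mcoeff (fun x => mcoeff (fun y => F y * (W y)ᴴ) 0 * V x) n) := by
  letI : ∀ {a b : ℕ}, ContinuousENorm (Mat a b) := matContinuousENorm
  have hGV : Integrable (fun x => (G x)ᴴ * V x) μh :=
    integrable_matmul (memLp_conjT (memLp_haar hG.1)) (memLp_haar hV.1.1)
  have hWF : Integrable (fun x => W x * (F x)ᴴ) μh :=
    integrable_matmul (memLp_haar hW.1.1) (memLp_conjT (memLp_haar hF.1))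
  have hU2 : MemLp U 2 μh := memLp_haar hU.1.1
  have hV2 : MemLp V 2 μh := memLp_haar hV.1.1
  have hQl2 : MemLp Ql 2 μh := memLp_haar hQl.1
  have hQr2 : MemLp Qr 2 μh := memLp_haar hQr.1
  set c1 : Mat d N := mcoeff (fun x => (G x)ᴴ * V x) 0 with hc1
  set c2 : Mat P d := mcoeff (fun x => W x * (F x)ᴴ) 0 with hc2
  have hc1' : c1ᴴ = mcoeff (fun y => (V y)ᴴ * G y) 0 := by
    rw [hc1, mcoeff_conjT_zero hGV]
    congr 1
    funext x
    simp [Matrix.conjTranspose_mul]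
  have hc2' : c2ᴴ = mcoeff (fun y => F y * (W y)ᴴ) 0 := by
    rw [hc2, mcoeff_conjT_zero hWF]
    congr 1
    funext x
    simp [Matrix.conjTranspose_mul]
  have hKlae : Kl =ᵐ[μh] fun x => fourier (-1) x • (Ql x - c1) :=
    shift_ae hGV hKl hKl' hQl
  have hKrae : Kr =ᵐ[μh] fun x => fourier (-1) x • (Qr x - c2) :=
    shift_ae hWF hKr hKr' hQr
  have hstar : ∀ x : Tc, star ((fourier (-1)) x : ℂ) = fourier 1 x := by
    intro x
    rw [fourier_neg]
    exact Complex.conj_conj _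
  constructor
  · intro n hn
    have e1 : (fun x => U x * (Kl x)ᴴ)
        =ᵐ[μh] fun x => fourier 1 x • (U x * ((Ql x)ᴴ - c1ᴴ)) := by
      refine hKlae.mono fun x hx => ?_
      simp only [hx, Matrix.conjTranspose_smul, Matrix.conjTranspose_sub,
        Matrix.mul_smul, hstar x]
    have e2 : mcoeff (fun x => U x * (Kl x)ᴴ) (n + 1)
        = fourierCoeff (fun x => U x * ((Ql x)ᴴ - c1ᴴ)) n := by
      show fourierCoeff (fun x => U x * (Kl x)ᴴ) (n + 1) = _
      rw [fourierCoeff_congr_ae' e1 (n + 1), fourierCoeff_fourier_smul,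
        show n + 1 - 1 = n from by omega]
    have i1 : Integrable (fun x => U x * (Ql x)ᴴ) μh :=
      integrable_matmul hU2 (memLp_conjT hQl2)
    have i2 : Integrable (fun x => U x * c1ᴴ) μh :=
      integrable_matmul hU2 (memLp_const _)
    have e3 : fourierCoeff (fun x => U x * ((Ql x)ᴴ - c1ᴴ)) n
        = fourierCoeff (fun x => U x * (Ql x)ᴴ) n
          - fourierCoeff (fun x => U x * c1ᴴ) n := by
      rw [← fourierCoeff_sub' i1 i2 n]
      congr 1
      funext x
      rw [Matrix.mul_sub]
    rw [e2, e3]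
    show _ = mcoeff (fun x => U x * (Ql x)ᴴ) n
      - mcoeff (fun x => U x * mcoeff (fun y => (V y)ᴴ * G y) 0) n
    rw [← hc1']
    rfl
  · intro n hn
    have e1 : (fun x => (Kr x)ᴴ * V x)
        =ᵐ[μh] fun x => fourier 1 x • (((Qr x)ᴴ - c2ᴴ) * V x) := by
      refine hKrae.mono fun x hx => ?_
      simp only [hx, Matrix.conjTranspose_smul, Matrix.conjTranspose_sub,
        Matrix.smul_mul, hstar x]
    have e2 : mcoeff (fun x => (Kr x)ᴴ * V x) (n + 1)
        = fourierCoeff (fun x => ((Qr x)ᴴ - c2ᴴ) * V x) n := by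
      show fourierCoeff (fun x => (Kr x)ᴴ * V x) (n + 1) = _
      rw [fourierCoeff_congr_ae' e1 (n + 1), fourierCoeff_fourier_smul,
        show n + 1 - 1 = n from by omega]
    have i1 : Integrable (fun x => (Qr x)ᴴ * V x) μh :=
      integrable_matmul (memLp_conjT hQr2) hV2
    have i2 : Integrable (fun x => c2ᴴ * V x) μh :=
      integrable_matmul (memLp_const _) hV2
    have e3 : fourierCoeff (fun x => ((Qr x)ᴴ - c2ᴴ) * V x) n
        = fourierCoeff (fun x => (Qr x)ᴴ * V x) n
          - fourierCoeff (fun x => c2ᴴ * V x) n := by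
      rw [← fourierCoeff_sub' i1 i2 n]
      congr 1
      funext x
      rw [Matrix.sub_mul]
    rw [e2, e3]
    show _ = mcoeff (fun x => (Qr x)ᴴ * V x) n
      - mcoeff (fun x => mcoeff (fun y => F y * (W y)ᴴ) 0 * V x) n
    rw [← hc2']
    rfl

end Main
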